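/- arXiv:1511.01555 — 5 statements merged into one kernel-verified Lean document; each statement's English description precedes it below -/
import Mathlib

section
/- For u in the Bochner space L^p_μ(Ξ;V), the best rank-m approximation error min over rank-≤m elements v of ‖u−v‖_p equals the minimum over all m-dimensional subspaces V_m of V of ‖u − P_{V_m} u‖_p, where P_{V_m} is the orthogonal projection onto V_m. -/
open MeasureTheory
open scoped ENNReal

/-!
Projecting onto an `m`-dimensional subspace `W` is itself a rank-`m` approximation, with
`v` an orthonormal basis of `W` and `s i = ⟪v i, u⟫`. Conversely a rank-`m` approximation
`∑ sᵢ vᵢ` takes values in `span (range v)`, which lies in some `m`-dimensional `W`; pointwise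
the orthogonal projection onto `W` is at least as close to `u`, so the `L^p` error only drops.
-/

theorem Submodule.exists_le_finrank_eq {K V : Type*} [DivisionRing K] [AddCommGroup V]
    [Module K V] [Module.Finite K V] {S : Submodule K V} {n : ℕ}
    (hS : Module.finrank K S ≤ n) (hn : n ≤ Module.finrank K V) :
    ∃ W : Submodule K V, S ≤ W ∧ Module.finrank K W = n := by
  induction n with
  | zero => exact ⟨S, le_rfl, Nat.le_zero.mp hS⟩
  | succ n ih =>
    rcases hS.eq_or_lt with hS | hS
    · exact ⟨S, le_rfl, hS⟩
    obtain ⟨W, hSW, hW⟩ := ih (Nat.lt_succ_iff.mp hS) (Nat.le_of_succ_le hn)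
    obtain ⟨x, -, hx⟩ := SetLike.exists_of_lt (lt_top_of_finrank_lt_finrank (hW ▸ hn))
    exact ⟨W ⊔ Submodule.span K {x}, hSW.trans le_sup_left, by
      rw [Submodule.finrank_sup_span_singleton hx, hW]⟩

theorem Submodule.exists_orthogonalProjectionOnto_eq_sum {𝕜 E : Type*} [RCLike 𝕜]
    [NormedAddCommGroup E] [InnerProductSpace 𝕜 E] (W : Submodule 𝕜 E) [FiniteDimensional 𝕜 W]
    {m : ℕ} (hW : Module.finrank 𝕜 W = m) :
    ∃ b : Fin m → E, ∀ x, (W.orthogonalProjectionOnto x : E) = ∑ i, inner 𝕜 (b i) x • b i := by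
  let b : OrthonormalBasis (Fin m) 𝕜 W := (stdOrthonormalBasis 𝕜 W).reindex (finCongr hW)
  refine ⟨fun i => b i, fun x => ?_⟩
  rw [b.orthogonalProjectionOnto_apply_eq_sum]
  push_cast
  rfl

theorem Submodule.norm_sub_orthogonalProjectionOnto_le {𝕜 E : Type*} [RCLike 𝕜]
    [NormedAddCommGroup E] [InnerProductSpace 𝕜 E] {U : Submodule 𝕜 E} [U.HasOrthogonalProjection]
    (y : E) {w : E} (hw : w ∈ U) :
    ‖y - (U.orthogonalProjectionOnto y : E)‖ ≤ ‖y - w‖ := by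
  rw [← Submodule.starProjection_apply, Submodule.starProjection_minimal]
  exact ciInf_le ⟨0, Set.forall_mem_range.mpr fun _ => norm_nonneg _⟩ (⟨w, hw⟩ : U)

theorem stmt0_general
    {Ξ : Type*} [MeasurableSpace Ξ] (μ : Measure Ξ)
    {V : Type*} [NormedAddCommGroup V] [InnerProductSpace ℝ V] [FiniteDimensional ℝ V]
    (u : Ξ → V) (p : ℝ≥0∞)
    (m : ℕ) (hm : m ≤ Module.finrank ℝ V) :
    sInf {e : ℝ≥0∞ | ∃ (v : Fin m → V) (s : Fin m → Ξ → ℝ),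
        e = eLpNorm (fun ξ => u ξ - ∑ i, s i ξ • v i) p μ}
      = sInf {e : ℝ≥0∞ | ∃ W : Submodule ℝ V, Module.finrank ℝ W = m ∧
        e = eLpNorm (fun ξ => u ξ - (W.orthogonalProjectionOnto (u ξ) : V)) p μ} := by
  apply le_antisymm
  · refine le_sInf ?_
    rintro e ⟨W, hW, rfl⟩
    obtain ⟨b, hb⟩ := W.exists_orthogonalProjectionOnto_eq_sum hW
    exact sInf_le ⟨b, fun i ξ => inner ℝ (b i) (u ξ), by simp_rw [hb]⟩
  · refine le_sInf ?_
    rintro e ⟨v, s, rfl⟩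
    have hspan : Module.finrank ℝ (Submodule.span ℝ (Set.range v)) ≤ m :=
      (finrank_range_le_card v).trans_eq (Fintype.card_fin m)
    obtain ⟨W, hvW, hW⟩ := Submodule.exists_le_finrank_eq hspan hm
    refine le_trans (sInf_le ⟨W, hW, rfl⟩) (eLpNorm_mono fun ξ => ?_)
    exact Submodule.norm_sub_orthogonalProjectionOnto_le _
      (hvW ((Submodule.mem_span_range_iff_exists_fun ℝ).mpr ⟨fun i => s i ξ, rfl⟩))

/-- Best rank-`m` approximation error in `L^p_μ(Ξ;V)` equals the minimal projection
error over `m`-dimensional subspaces. -/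
theorem stmt0
    {Ξ : Type*} [MeasurableSpace Ξ] (μ : Measure Ξ) [IsProbabilityMeasure μ]
    {V : Type*} [NormedAddCommGroup V] [InnerProductSpace ℝ V] [FiniteDimensional ℝ V]
    (u : Ξ → V) (p : ℝ≥0∞) (hp : 1 ≤ p) (hu : MemLp u p μ)
    (m : ℕ) (hm : m ≤ Module.finrank ℝ V) :
    sInf {e : ℝ≥0∞ | ∃ (v : Fin m → V) (s : Fin m → Ξ → ℝ),
        e = eLpNorm (fun ξ => u ξ - ∑ i, s i ξ • v i) p μ}
      = sInf {e : ℝ≥0∞ | ∃ W : Submodule ℝ V, Module.finrank ℝ W = m ∧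
        e = eLpNorm (fun ξ => u ξ - (W.orthogonalProjectionOnto (u ξ) : V)) p μ} :=
  stmt0_general μ u p m hm
end

section
/- Suppose Δ(·;ξ): V → ℝ satisfies α_Δ‖u(ξ)−v‖_V ≤ Δ(v;ξ) ≤ β_Δ‖u(ξ)−v‖_V for all v ∈ V, ξ ∈ Ξ, with 0 < α_Δ ≤ β_Δ. If V_m minimizes ∫_Ξ inf_{v∈V_m} Δ(v;ξ)² dμ(ξ) over all m-dimensional subspaces, then ‖u − P_{V_m}u‖_2 ≤ (β_Δ/α_Δ) · d_m^{(2)}(u), where d_m^{(2)}(u) is the optimal error over m-dimensional subspaces in the L²_μ(Ξ;V) norm. -/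
open MeasureTheory
open scoped ENNReal

/-! Pointwise in `ξ`, the best-approximation property of the orthogonal projection gives
`α ‖u − P_{V_m} u‖ ≤ inf_{V_m} Δ`, while testing the infimum over `W` at `P_W u` gives
`inf_W Δ ≤ β ‖u − P_W u‖`. Taking `L²` norms and inserting the minimality of `V_m` in between
yields `α ‖u − P_{V_m} u‖₂ ≤ β ‖u − P_W u‖₂` for every `m`-dimensional `W`. -/

namespace Submodule

variable {V : Type*} [NormedAddCommGroup V] [InnerProductSpace ℝ V]
  (K : Submodule ℝ V) [K.HasOrthogonalProjection] {f : V → ℝ} {x : V}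

theorem mul_norm_sub_starProjection_le_iInf {α : ℝ} (hα : 0 ≤ α)
    (hf : ∀ v, α * ‖x - v‖ ≤ f v) : α * ‖x - K.starProjection x‖ ≤ ⨅ v : K, f v := by
  rw [starProjection_minimal]
  refine le_ciInf fun v => ?_
  calc α * ⨅ w : K, ‖x - w‖
      ≤ α * ‖x - v‖ := by
        gcongr
        exact ciInf_le ⟨0, Set.forall_mem_range.2 fun _ => norm_nonneg _⟩ v
    _ ≤ f v := hf v

theorem iInf_le_mul_norm_sub_starProjection {β : ℝ} (hf₀ : 0 ≤ f)
    (hf : ∀ v, f v ≤ β * ‖x - v‖) : ⨅ v : K, f v ≤ β * ‖x - K.starProjection x‖ :=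
  ciInf_le_of_le ⟨0, Set.forall_mem_range.2 fun v => hf₀ v⟩ (K.orthogonalProjectionOnto x) (hf _)

end Submodule

namespace MeasureTheory

theorem eLpNorm_le_eLpNorm_of_lintegral_pow_le {α ε ε' : Type*} [MeasurableSpace α]
    {μ : Measure α} [ENorm ε] [ENorm ε'] {f : α → ε} {g : α → ε'} {n : ℕ} (hn : n ≠ 0)
    (h : ∫⁻ x, ‖f x‖ₑ ^ n ∂μ ≤ ∫⁻ x, ‖g x‖ₑ ^ n ∂μ) : eLpNorm f n μ ≤ eLpNorm g n μ := by
  have hn' : (n : ℝ≥0∞) ≠ 0 := Nat.cast_ne_zero.2 hn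
  simp only [eLpNorm_eq_lintegral_rpow_enorm_toReal hn' (ENNReal.natCast_ne_top n),
    ENNReal.toReal_natCast, ENNReal.rpow_natCast]
  gcongr

section ScaledComparison

variable {α E : Type*} [MeasurableSpace α] {μ : Measure α} {p : ℝ≥0∞}
  [NormedAddCommGroup E] {f : α → E} {g : α → ℝ} {c : ℝ}

theorem ofReal_mul_eLpNorm_le_eLpNorm_ofReal (hc : 0 ≤ c) (h : ∀ x, c * ‖f x‖ ≤ g x) :
    ENNReal.ofReal c * eLpNorm f p μ ≤ eLpNorm (fun x => ENNReal.ofReal (g x)) p μ := by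
  rw [← eLpNorm_norm f, ← Real.enorm_of_nonneg hc, ← eLpNorm_const_smul]
  refine eLpNorm_mono_enorm fun x => ?_
  rw [enorm_eq_self, ← ofReal_norm, Pi.smul_apply, smul_eq_mul,
    Real.norm_of_nonneg (by positivity)]
  exact ENNReal.ofReal_le_ofReal (h x)

theorem eLpNorm_ofReal_le_ofReal_mul_eLpNorm (hc : 0 ≤ c) (h : ∀ x, g x ≤ c * ‖f x‖) :
    eLpNorm (fun x => ENNReal.ofReal (g x)) p μ ≤ ENNReal.ofReal c * eLpNorm f p μ := by
  rw [← eLpNorm_norm f, ← Real.enorm_of_nonneg hc, ← eLpNorm_const_smul]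
  refine eLpNorm_mono_enorm fun x => ?_
  rw [enorm_eq_self, ← ofReal_norm, Pi.smul_apply, smul_eq_mul,
    Real.norm_of_nonneg (by positivity)]
  exact ENNReal.ofReal_le_ofReal (h x)

end ScaledComparison

end MeasureTheory

theorem ENNReal.le_mul_sInf {a c : ℝ≥0∞} {s : Set ℝ≥0∞} (hc₀ : c ≠ 0) (hc : c ≠ ∞)
    (h : ∀ y ∈ s, a ≤ c * y) : a ≤ c * sInf s :=
  calc a = c * (a / c) := (ENNReal.mul_div_cancel hc₀ hc).symm
    _ ≤ c * sInf s := by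
      gcongr
      exact le_sInf fun y hy => ENNReal.div_le_of_le_mul' (h y hy)

theorem stmt4_general
    {Ξ : Type*} [MeasurableSpace Ξ] (μ : Measure Ξ)
    {V : Type*} [NormedAddCommGroup V] [InnerProductSpace ℝ V] [FiniteDimensional ℝ V]
    (u : Ξ → V)
    (Δ : V → Ξ → ℝ) (αΔ βΔ : ℝ) (hα : 0 < αΔ) (hαβ : αΔ ≤ βΔ)
    (hΔ : ∀ (v : V) (ξ : Ξ), αΔ * ‖u ξ - v‖ ≤ Δ v ξ ∧ Δ v ξ ≤ βΔ * ‖u ξ - v‖)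
    (m : ℕ) (Vm : Submodule ℝ V)
    (hmin : ∀ W : Submodule ℝ V, Module.finrank ℝ W = m →
      ∫⁻ ξ, (ENNReal.ofReal (⨅ v : Vm, Δ (v : V) ξ)) ^ 2 ∂μ
        ≤ ∫⁻ ξ, (ENNReal.ofReal (⨅ v : W, Δ (v : V) ξ)) ^ 2 ∂μ) :
    eLpNorm (fun ξ => u ξ - (Vm.orthogonalProjectionOnto (u ξ) : V)) 2 μ
      ≤ ENNReal.ofReal (βΔ / αΔ) *
        sInf {e : ℝ≥0∞ | ∃ W : Submodule ℝ V, Module.finrank ℝ W = m ∧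
          e = eLpNorm (fun ξ => u ξ - (W.orthogonalProjectionOnto (u ξ) : V)) 2 μ} := by
  simp only [← Submodule.starProjection_apply]
  have hβ : 0 < βΔ := hα.trans_le hαβ
  have hΔ₀ : ∀ ξ, 0 ≤ fun v => Δ v ξ := fun ξ v =>
    (mul_nonneg hα.le (norm_nonneg _)).trans (hΔ v ξ).1
  have key : ∀ W : Submodule ℝ V, Module.finrank ℝ W = m →
      ENNReal.ofReal αΔ * eLpNorm (fun ξ => u ξ - Vm.starProjection (u ξ)) 2 μ
        ≤ ENNReal.ofReal βΔ * eLpNorm (fun ξ => u ξ - W.starProjection (u ξ)) 2 μ := by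
    intro W hW
    calc ENNReal.ofReal αΔ * eLpNorm (fun ξ => u ξ - Vm.starProjection (u ξ)) 2 μ
        ≤ eLpNorm (fun ξ => ENNReal.ofReal (⨅ v : Vm, Δ v ξ)) 2 μ :=
          ofReal_mul_eLpNorm_le_eLpNorm_ofReal hα.le fun ξ =>
            Vm.mul_norm_sub_starProjection_le_iInf hα.le fun v => (hΔ v ξ).1
      _ ≤ eLpNorm (fun ξ => ENNReal.ofReal (⨅ v : W, Δ v ξ)) 2 μ :=
          eLpNorm_le_eLpNorm_of_lintegral_pow_le two_ne_zero
            (by simpa only [enorm_eq_self] using hmin W hW)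
      _ ≤ ENNReal.ofReal βΔ * eLpNorm (fun ξ => u ξ - W.starProjection (u ξ)) 2 μ :=
          eLpNorm_ofReal_le_ofReal_mul_eLpNorm hβ.le fun ξ =>
            W.iInf_le_mul_norm_sub_starProjection (hΔ₀ ξ) fun v => (hΔ v ξ).2
  refine ENNReal.le_mul_sInf (by simpa using div_pos hβ hα) ENNReal.ofReal_ne_top ?_
  rintro _ ⟨W, hW, rfl⟩
  rw [ENNReal.ofReal_div_of_pos hα, ← ENNReal.mul_div_right_comm,
    ENNReal.le_div_iff_mul_le (Or.inl (by simpa using hα)) (Or.inl ENNReal.ofReal_ne_top),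
    mul_comm]
  exact key W hW

/-- Quasi-optimality of PGD-type subspaces: if `Δ(·;ξ)` is uniformly equivalent to
the distance to `u(ξ)` and `V_m` minimizes `∫_Ξ inf_{v∈V_m} Δ(v;ξ)² dμ` over all
`m`-dimensional subspaces, then `‖u − P_{V_m}u‖₂ ≤ (β_Δ/α_Δ) d_m^{(2)}(u)`. -/
theorem stmt4
    {Ξ : Type*} [MeasurableSpace Ξ] (μ : Measure Ξ) [IsProbabilityMeasure μ]
    {V : Type*} [NormedAddCommGroup V] [InnerProductSpace ℝ V] [FiniteDimensional ℝ V]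
    (u : Ξ → V)
    (Δ : V → Ξ → ℝ) (αΔ βΔ : ℝ) (hα : 0 < αΔ) (hαβ : αΔ ≤ βΔ)
    (hΔ : ∀ (v : V) (ξ : Ξ), αΔ * ‖u ξ - v‖ ≤ Δ v ξ ∧ Δ v ξ ≤ βΔ * ‖u ξ - v‖)
    (m : ℕ) (Vm : Submodule ℝ V) (hVm : Module.finrank ℝ Vm = m)
    (hmin : ∀ W : Submodule ℝ V, Module.finrank ℝ W = m →
      ∫⁻ ξ, (ENNReal.ofReal (⨅ v : Vm, Δ (v : V) ξ)) ^ 2 ∂μ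
        ≤ ∫⁻ ξ, (ENNReal.ofReal (⨅ v : W, Δ (v : V) ξ)) ^ 2 ∂μ) :
    eLpNorm (fun ξ => u ξ - (Vm.orthogonalProjectionOnto (u ξ) : V)) 2 μ
      ≤ ENNReal.ofReal (βΔ / αΔ) *
        sInf {e : ℝ≥0∞ | ∃ W : Submodule ℝ V, Module.finrank ℝ W = m ∧
          e = eLpNorm (fun ξ => u ξ - (W.orthogonalProjectionOnto (u ξ) : V)) 2 μ} :=
  stmt4_general μ u Δ αΔ βΔ hα hαβ hΔ m Vm hmin
end

section
/- Under the assumptions that Δ satisfies α_Δ‖u(ξ)−v‖ ≤ Δ(v;ξ) ≤ β_Δ‖u(ξ)−v‖ and that the projection u_m(ξ) onto V_m satisfies ‖u(ξ)−u_m(ξ)‖ ≤ c(ξ) min_{v∈V_m}‖u(ξ)−v‖ with c(ξ) ≥ 1 bounded, the greedy point ξ*^{m+1} maximizing Δ(u_m(ξ);ξ) over a finite set Ξ_K satisfies ‖u(ξ*^{m+1}) − P_{V_m}u(ξ*^{m+1})‖_V ≥ γ max_{ξ∈Ξ_K} ‖u(ξ) − P_{V_m}u(ξ)‖_V with γ =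 (α_Δ/β_Δ) · inf_{ξ∈Ξ_K} c(ξ)^{-1}. -/
/-!
The greedy point maximizes the error indicator, and the indicator is equivalent to the error of
the quasi-optimal approximation `u_m`. Hence for every `ξ` in the training set,
`α ‖u ξ - P u ξ‖ ≤ α ‖u ξ - u_m ξ‖ ≤ Δ(u_m ξ; ξ) ≤ Δ(u_m ξ*; ξ*) ≤ β ‖u ξ* - u_m ξ*‖
≤ β c(ξ*) ‖u ξ* - P u ξ*‖`,
the first step being the best-approximation property of the orthogonal projection.
-/

theorem Submodule.norm_sub_orthogonalProjectionOnto_le_s5 {𝕜 E : Type*} [RCLike 𝕜]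
    [NormedAddCommGroup E] [InnerProductSpace 𝕜 E] (K : Submodule 𝕜 E) [K.HasOrthogonalProjection]
    (y : E) {x : E} (hx : x ∈ K) : ‖y - (K.orthogonalProjectionOnto y : E)‖ ≤ ‖y - x‖ := by
  rw [← starProjection_apply, starProjection_minimal]
  exact ciInf_le ⟨0, by rintro _ ⟨_, rfl⟩; positivity⟩ (⟨x, hx⟩ : K)

theorem div_mul_inv_mul_le_of_mul_le_mul {α β c a b : ℝ} (hβ : 0 < β) (hc : 0 ≤ c) (hb : 0 ≤ b)
    (h : α * a ≤ β * (c * b)) : α / β * c⁻¹ * a ≤ b := by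
  have h' : α * a / β ≤ c * b := div_le_of_le_mul₀ hβ.le (by positivity) (h.trans_eq (mul_comm _ _))
  calc α / β * c⁻¹ * a = c⁻¹ * (α * a / β) := by ring
    _ ≤ b := inv_mul_le_of_le_mul₀ hc hb h'

section WeakGreedy

variable {Ξ V : Type*} [NormedAddCommGroup V] [InnerProductSpace ℝ V]
  (u : Ξ → V) (Vm : Submodule ℝ V) [Vm.HasOrthogonalProjection]
  (Δ : V → Ξ → ℝ) {αΔ βΔ : ℝ} (um : Ξ → V) (c : Ξ → ℝ)

theorem mul_norm_sub_orthogonalProjectionOnto_le_of_greedy (hα : 0 ≤ αΔ) (hβ : 0 ≤ βΔ)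
    (hΔ : ∀ (v : V) (ξ : Ξ), αΔ * ‖u ξ - v‖ ≤ Δ v ξ ∧ Δ v ξ ≤ βΔ * ‖u ξ - v‖)
    {ξ ξs : Ξ} (hum : um ξ ∈ Vm)
    (hquasi : ‖u ξs - um ξs‖ ≤ c ξs * ‖u ξs - (Vm.orthogonalProjectionOnto (u ξs) : V)‖)
    (hgreedy : Δ (um ξ) ξ ≤ Δ (um ξs) ξs) :
    αΔ * ‖u ξ - (Vm.orthogonalProjectionOnto (u ξ) : V)‖
      ≤ βΔ * (c ξs * ‖u ξs - (Vm.orthogonalProjectionOnto (u ξs) : V)‖) :=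
  calc αΔ * ‖u ξ - (Vm.orthogonalProjectionOnto (u ξ) : V)‖
      ≤ αΔ * ‖u ξ - um ξ‖ :=
        mul_le_mul_of_nonneg_left (Vm.norm_sub_orthogonalProjectionOnto_le_s5 _ hum) hα
    _ ≤ Δ (um ξ) ξ := (hΔ (um ξ) ξ).1
    _ ≤ Δ (um ξs) ξs := hgreedy
    _ ≤ βΔ * ‖u ξs - um ξs‖ := (hΔ (um ξs) ξs).2
    _ ≤ βΔ * (c ξs * ‖u ξs - (Vm.orthogonalProjectionOnto (u ξs) : V)‖) :=
        mul_le_mul_of_nonneg_left hquasi hβ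

end WeakGreedy

theorem stmt5_general
    {Ξ : Type*} {V : Type*} [NormedAddCommGroup V] [InnerProductSpace ℝ V]
    [FiniteDimensional ℝ V]
    (u : Ξ → V) (ΞK : Finset Ξ)
    (Vm : Submodule ℝ V)
    (Δ : V → Ξ → ℝ) (αΔ βΔ : ℝ) (hα : 0 < αΔ) (hαβ : αΔ ≤ βΔ)
    (hΔ : ∀ (v : V) (ξ : Ξ), αΔ * ‖u ξ - v‖ ≤ Δ v ξ ∧ Δ v ξ ≤ βΔ * ‖u ξ - v‖)
    (um : Ξ → V) (hum : ∀ ξ, um ξ ∈ Vm)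
    (c : Ξ → ℝ) (hc : ∀ ξ, 1 ≤ c ξ)
    (hquasi : ∀ ξ, ‖u ξ - um ξ‖ ≤ c ξ * ‖u ξ - (Vm.orthogonalProjectionOnto (u ξ) : V)‖)
    (ξs : Ξ) (hξs : ξs ∈ ΞK)
    (hgreedy : ∀ ξ ∈ ΞK, Δ (um ξ) ξ ≤ Δ (um ξs) ξs) :
    ∀ ξ ∈ ΞK,
      (αΔ / βΔ) * (⨅ ξ' : ΞK, (c ξ'.1)⁻¹) *
          ‖u ξ - (Vm.orthogonalProjectionOnto (u ξ) : V)‖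
        ≤ ‖u ξs - (Vm.orthogonalProjectionOnto (u ξs) : V)‖ := by
  intro ξ hξ
  have hβ : 0 < βΔ := hα.trans_le hαβ
  have hinf : (⨅ ξ' : ΞK, (c ξ'.1)⁻¹) ≤ (c ξs)⁻¹ :=
    ciInf_le (Finite.bddBelow_range _) (⟨ξs, hξs⟩ : ΞK)
  calc (αΔ / βΔ) * (⨅ ξ' : ΞK, (c ξ'.1)⁻¹) * ‖u ξ - (Vm.orthogonalProjectionOnto (u ξ) : V)‖
      ≤ (αΔ / βΔ) * (c ξs)⁻¹ * ‖u ξ - (Vm.orthogonalProjectionOnto (u ξ) : V)‖ := by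
        gcongr
    _ ≤ ‖u ξs - (Vm.orthogonalProjectionOnto (u ξs) : V)‖ :=
        div_mul_inv_mul_le_of_mul_le_mul hβ (zero_le_one.trans (hc ξs)) (norm_nonneg _)
          (mul_norm_sub_orthogonalProjectionOnto_le_of_greedy u Vm Δ um c hα.le hβ.le hΔ
            (hum ξ) (hquasi ξs) (hgreedy ξ hξ))

/-- Weak greedy property of the Reduced Basis greedy algorithm: the greedy point
`ξ*` maximizing the error indicator `Δ(u_m(ξ);ξ)` over the training set `Ξ_K`
satisfies `‖u(ξ*) − P_{V_m}u(ξ*)‖ ≥ γ max_{ξ∈Ξ_K} ‖u(ξ) − P_{V_m}u(ξ)‖`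
with `γ = (α_Δ/β_Δ)·inf_{ξ∈Ξ_K} c(ξ)⁻¹`. -/
theorem stmt5
    {Ξ : Type*} {V : Type*} [NormedAddCommGroup V] [InnerProductSpace ℝ V]
    [FiniteDimensional ℝ V]
    (u : Ξ → V) (ΞK : Finset Ξ) (hΞK : ΞK.Nonempty)
    (Vm : Submodule ℝ V)
    (Δ : V → Ξ → ℝ) (αΔ βΔ : ℝ) (hα : 0 < αΔ) (hαβ : αΔ ≤ βΔ)
    (hΔ : ∀ (v : V) (ξ : Ξ), αΔ * ‖u ξ - v‖ ≤ Δ v ξ ∧ Δ v ξ ≤ βΔ * ‖u ξ - v‖)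
    (um : Ξ → V) (hum : ∀ ξ, um ξ ∈ Vm)
    (c : Ξ → ℝ) (hc : ∀ ξ, 1 ≤ c ξ)
    (hquasi : ∀ ξ, ‖u ξ - um ξ‖ ≤ c ξ * ‖u ξ - (Vm.orthogonalProjectionOnto (u ξ) : V)‖)
    (ξs : Ξ) (hξs : ξs ∈ ΞK)
    (hgreedy : ∀ ξ ∈ ΞK, Δ (um ξ) ξ ≤ Δ (um ξs) ξs) :
    ∀ ξ ∈ ΞK,
      (αΔ / βΔ) * (⨅ ξ' : ΞK, (c ξ'.1)⁻¹) *
          ‖u ξ - (Vm.orthogonalProjectionOnto (u ξ) : V)‖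
        ≤ ‖u ξs - (Vm.orthogonalProjectionOnto (u ξs) : V)‖ :=
  stmt5_general u ΞK Vm Δ αΔ βΔ hα hαβ hΔ um hum c hc hquasi ξs hξs hgreedy
end

section
/- For any subsets α, β, with β ⊆ α ⊆ D, and any tensor v, rank_α(v) ≤ rank_β(v) · rank_{α∖β}(v). -/
/-! A `β`-representation `v = ∑ᵢ fᵢ hᵢ` puts every `β`-slice `z ↦ v (β.piecewise z x)` into the
span `W` of the `fᵢ`, whose dimension is at most `rank_β v`. Choosing a basis `b` of `W` and linear
functionals `φₚ` on the whole function space that restrict to its coordinates gives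
`v x = ∑ₚ bₚ x · φₚ (slice x)`. Inserting an `(α ∖ β)`-representation `v = ∑ⱼ gⱼ kⱼ` into the
linear `φₚ` splits `φₚ (slice x)` as `∑ⱼ gⱼ x · φₚ (kⱼ-slice x)`; here `bₚ gⱼ` depends only on the
coordinates in `α` and `x ↦ φₚ (kⱼ-slice x)` only on those in `αᶜ`. -/

/-- `v` admits a representation `v(ξ) = ∑_{i=1}^r f_i(ξ_γ) g_i(ξ_{γ^c})`. -/
def hasAlphaRepr {d : ℕ} {Ξ : Fin d → Type*} (γ : Set (Fin d)) (r : ℕ)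
    (v : (∀ ν, Ξ ν) → ℝ) : Prop :=
  ∃ (f : Fin r → ((∀ ν : {ν // ν ∈ γ}, Ξ ν.1) → ℝ))
    (g : Fin r → ((∀ ν : {ν // ν ∈ (γᶜ : Set (Fin d))}, Ξ ν.1) → ℝ)),
    ∀ x, v x = ∑ i, f i (fun ν => x ν.1) * g i (fun ν => x ν.1)

/-- The `γ`-rank of a multivariate function. -/
noncomputable def rankAlpha {d : ℕ} {Ξ : Fin d → Type*} (γ : Set (Fin d))
    (v : (∀ ν, Ξ ν) → ℝ) : ℕ :=
  sInf {r | hasAlphaRepr γ r v}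

open Set Submodule

theorem Submodule.exists_sum_smul_eq_self {K V : Type*} [Field K] [AddCommGroup V] [Module K V]
    (W : Submodule K V) [FiniteDimensional K W] :
    ∃ (b : Fin (Module.finrank K W) → V) (φ : Fin (Module.finrank K W) → V →ₗ[K] K),
      (∀ p, b p ∈ W) ∧ ∀ w ∈ W, ∑ p, φ p w • b p = w := by
  obtain ⟨π, hπ⟩ := W.subtype.exists_leftInverse_of_injective W.ker_subtype
  let e := Module.finBasis K W
  refine ⟨fun p => e p, fun p => e.coord p ∘ₗ π, fun p => (e p).2, fun w hw => ?_⟩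
  have hπw : π w = ⟨w, hw⟩ := LinearMap.congr_fun hπ ⟨w, hw⟩
  have := congrArg Subtype.val (e.sum_repr ⟨w, hw⟩)
  rw [Submodule.coe_sum] at this
  simpa only [LinearMap.comp_apply, hπw, Module.Basis.coord_apply, Submodule.coe_smul] using this

section DependsOn

variable {ι : Type*} {π : ι → Type*} {s t : Set ι}

def dependsOnSubmodule (R : Type*) [Semiring R] (s : Set ι) : Submodule R ((Π i, π i) → R) where
  carrier := {f | DependsOn f s}
  add_mem' hf hg _ _ h := by simp only [Pi.add_apply, hf h, hg h]
  zero_mem' _ _ _ := rfl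
  smul_mem' _ _ hf _ _ h := by simp only [Pi.smul_apply, hf h]

theorem DependsOn.mul {R : Type*} [Mul R] {f g : (Π i, π i) → R} (hf : DependsOn f s)
    (hg : DependsOn g s) : DependsOn (f * g) s :=
  fun _ _ h => by simp only [Pi.mul_apply, hf h, hg h]

variable [DecidablePred (· ∈ s)] {β : Type*} {f : (Π i, π i) → β}

theorem DependsOn.piecewise_eq_left (hf : DependsOn f s) (z x : Π i, π i) :
    f (s.piecewise z x) = f z :=
  hf fun _ hi => piecewise_eq_of_mem _ _ _ hi

theorem DependsOn.piecewise_eq_right (hf : DependsOn f t) (hst : Disjoint s t)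
    (z x : Π i, π i) : f (s.piecewise z x) = f x :=
  hf fun _ hi => piecewise_eq_of_notMem _ _ _ (hst.notMem_of_mem_right hi)

theorem DependsOn.comp_piecewise (hf : DependsOn f t) :
    DependsOn (fun x z => f (s.piecewise z x)) (t \ s) := by
  intro x y h
  funext z
  refine hf fun i hi => ?_
  by_cases his : i ∈ s
  · simp only [piecewise_eq_of_mem _ _ _ his]
  · simp only [piecewise_eq_of_notMem _ _ _ his, h i ⟨hi, his⟩]

end DependsOn

section Rank

variable {d : ℕ} {Ξ : Fin d → Type*} {γ : Set (Fin d)} {r : ℕ} {v : (∀ ν, Ξ ν) → ℝ}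

theorem hasAlphaRepr_iff_dependsOn :
    hasAlphaRepr γ r v ↔ ∃ f g : Fin r → (∀ ν, Ξ ν) → ℝ, (∀ i, DependsOn (f i) γ) ∧
      (∀ i, DependsOn (g i) γᶜ) ∧ ∀ x, v x = ∑ i, f i x * g i x := by
  constructor
  · rintro ⟨f, g, hv⟩
    exact ⟨fun i => f i ∘ γ.domRestrict, fun i => g i ∘ γᶜ.domRestrict,
      fun i _ _ h => congrArg (f i) (γ.dependsOn_domRestrict h),
      fun i _ _ h => congrArg (g i) (γᶜ.dependsOn_domRestrict h), hv⟩
  · rintro ⟨f, g, hf, hg, hv⟩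
    choose F hF using fun i => dependsOn_iff_exists_comp.1 (hf i)
    choose G hG using fun i => dependsOn_iff_exists_comp.1 (hg i)
    refine ⟨F, G, fun x => ?_⟩
    simp only [hv x, hF, hG, Function.comp_apply]
    rfl

theorem hasAlphaRepr_of_dependsOn {ι : Type*} [Fintype ι] (f g : ι → (∀ ν, Ξ ν) → ℝ)
    (hf : ∀ i, DependsOn (f i) γ) (hg : ∀ i, DependsOn (g i) γᶜ)
    (hv : ∀ x, v x = ∑ i, f i x * g i x) : hasAlphaRepr γ (Fintype.card ι) v := by
  let e := Fintype.equivFin ι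
  refine hasAlphaRepr_iff_dependsOn.2 ⟨f ∘ e.symm, g ∘ e.symm, fun i => hf _, fun i => hg _,
    fun x => ?_⟩
  rw [hv x]
  exact (e.symm.sum_comp fun i => f i x * g i x).symm

theorem exists_hasAlphaRepr [∀ ν, Fintype (Ξ ν)] (γ : Set (Fin d)) (v : (∀ ν, Ξ ν) → ℝ) :
    ∃ r, hasAlphaRepr γ r v := by
  classical
  refine ⟨_, hasAlphaRepr_of_dependsOn (ι := ∀ ν, Ξ ν)
    (fun y x => if γ.domRestrict x = γ.domRestrict y then 1 else 0)
    (fun y x => if γᶜ.domRestrict x = γᶜ.domRestrict y then v y else 0)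
    (fun y _ _ h => by simp only [γ.dependsOn_domRestrict h])
    (fun y _ _ h => by simp only [γᶜ.dependsOn_domRestrict h]) fun x => ?_⟩
  have hsep : ∀ y, γ.domRestrict x = γ.domRestrict y → γᶜ.domRestrict x = γᶜ.domRestrict y →
      x = y := fun y h h' => funext fun ν => by
    by_cases hν : ν ∈ γ
    · exact congrFun h ⟨ν, hν⟩
    · exact congrFun h' ⟨ν, hν⟩
  rw [Finset.sum_eq_single x (fun y _ hyx => by grind) (by simp)]
  simp

theorem hasAlphaRepr_rankAlpha [∀ ν, Fintype (Ξ ν)] (γ : Set (Fin d)) (v : (∀ ν, Ξ ν) → ℝ) :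
    hasAlphaRepr γ (rankAlpha γ v) v :=
  Nat.sInf_mem (exists_hasAlphaRepr γ v)

theorem rankAlpha_le (h : hasAlphaRepr γ r v) : rankAlpha γ v ≤ r :=
  Nat.sInf_le h

theorem exists_sum_mul_slice {β : Set (Fin d)} [DecidablePred (· ∈ β)]
    (hβ : hasAlphaRepr β r v) :
    ∃ m ≤ r, ∃ (b : Fin m → (∀ ν, Ξ ν) → ℝ) (φ : Fin m → ((∀ ν, Ξ ν) → ℝ) →ₗ[ℝ] ℝ),
      (∀ p, DependsOn (b p) β) ∧ ∀ x, v x = ∑ p, b p x * φ p (fun z => v (β.piecewise z x)) := by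
  obtain ⟨f, h, hf, hh, hv⟩ := hasAlphaRepr_iff_dependsOn.1 hβ
  let W := span ℝ (range f)
  have : FiniteDimensional ℝ W := FiniteDimensional.span_of_finite ℝ (finite_range f)
  obtain ⟨b, φ, hbW, hφ⟩ := W.exists_sum_smul_eq_self
  have hWβ : W ≤ dependsOnSubmodule ℝ β := span_le.2 (range_subset_iff.2 hf)
  have hslice : ∀ x, (fun z => v (β.piecewise z x)) = ∑ i, h i x • f i := fun x => by
    funext z
    simp only [hv, (hf _).piecewise_eq_left, (hh _).piecewise_eq_right disjoint_compl_right,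
      Finset.sum_apply, Pi.smul_apply, smul_eq_mul, mul_comm]
  refine ⟨_, (finrank_range_le_card f).trans_eq (Fintype.card_fin r), b, φ,
    fun p => hWβ (hbW p), fun x => ?_⟩
  have hmem : (fun z => v (β.piecewise z x)) ∈ W := hslice x ▸
    sum_mem fun i _ => smul_mem _ _ (subset_span (mem_range_self i))
  calc v x = (fun z => v (β.piecewise z x)) x := by simp only [piecewise_same]
    _ = (∑ p, φ p (fun z => v (β.piecewise z x)) • b p) x := by rw [hφ _ hmem]
    _ = _ := by
      simp only [Finset.sum_apply, Pi.smul_apply, smul_eq_mul]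
      exact Finset.sum_congr rfl fun p _ => mul_comm _ _

theorem rankAlpha_le_mul {α β : Set (Fin d)} {s : ℕ} (hβα : β ⊆ α) (hβ : hasAlphaRepr β r v)
    (hαβ : hasAlphaRepr (α \ β) s v) : rankAlpha α v ≤ r * s := by
  classical
  obtain ⟨m, hm, b, φ, hb, hv⟩ := exists_sum_mul_slice hβ
  obtain ⟨g, k, hg, hk, hv'⟩ := hasAlphaRepr_iff_dependsOn.1 hαβ
  have hslice : ∀ x, (fun z => v (β.piecewise z x)) = ∑ j, g j x • fun z => k j (β.piecewise z x) :=
    fun x => by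
      funext z
      simp only [hv', (hg _).piecewise_eq_right disjoint_sdiff_right, Finset.sum_apply,
        Pi.smul_apply, smul_eq_mul]
  have hK : ∀ p j, DependsOn (fun x => φ p (fun z => k j (β.piecewise z x))) αᶜ :=
    fun p j _ _ hxy => congrArg (φ p) <| ((hk j).comp_piecewise.mono (by grind)) hxy
  have hbg : ∀ p j, DependsOn (b p * g j) α := fun p j =>
    ((hb p).mono hβα).mul ((hg j).mono sdiff_subset)
  calc rankAlpha α v ≤ Fintype.card (Fin m × Fin s) :=
        rankAlpha_le <| hasAlphaRepr_of_dependsOn (fun pj => b pj.1 * g pj.2)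
          (fun pj x => φ pj.1 (fun z => k pj.2 (β.piecewise z x)))
          (fun pj => hbg pj.1 pj.2) (fun pj => hK pj.1 pj.2) fun x => by
            simp only [hv x, hslice x, map_sum, map_smul, Fintype.sum_prod_type, Finset.mul_sum,
              smul_eq_mul, Pi.mul_apply, mul_assoc]
    _ = m * s := by simp
    _ ≤ r * s := Nat.mul_le_mul_right _ hm

end Rank

/-- Submultiplicativity of the `α`-ranks: for `β ⊆ α`,
`rank_α(v) ≤ rank_β(v) · rank_{α∖β}(v)`. -/
theorem stmt10 {d : ℕ} {Ξ : Fin d → Type*} [∀ ν, Fintype (Ξ ν)]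
    (α β : Set (Fin d)) (hβα : β ⊆ α)
    (v : (∀ ν, Ξ ν) → ℝ) :
    rankAlpha α v ≤ rankAlpha β v * rankAlpha (α \ β) v :=
  rankAlpha_le_mul hβα (hasAlphaRepr_rankAlpha β v) (hasAlphaRepr_rankAlpha (α \ β) v)
end

section
/- Let x_{k+1} = Π_ε(x_k + α(b − A x_k)) be an inexact Richardson iteration in a Hilbert space, where ‖I − αA‖ ≤ ρ < 1 and the truncation map satisfies ‖w − Π_ε(w)‖ ≤ ε‖w‖ for all w. Then limsup_{k→∞} ‖u − x_k‖ ≤ C(ε), where u = A^{-1}b and C(ε) = ε(1+ρ)‖u‖/(1 − ρ − ε(1+ρ)) (for ε small enough that ρ + ε(1+ρ) < 1); in particular C(ε) → 0 as ε → 0. -/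
/-!
Writing `e_k = ‖u - x_k‖`, the exact Richardson step contracts the error by `ρ`, and the
truncation adds at most `ε‖w‖ ≤ ε(‖u‖ + ρ e_k)`. Hence `e_{k+1} ≤ (1 + ε)ρ e_k + ε‖u‖`, a
perturbed geometric recursion whose limsup is at most `ε‖u‖ / (1 - (1 + ε)ρ)`, which is
bounded by `C(ε)`.
-/

open Filter

section Richardson

variable {𝕜 E : Type*} [NontriviallyNormedField 𝕜] [SeminormedAddCommGroup E] [NormedSpace 𝕜 E]

theorem sub_richardson_step_eq (A : E →L[𝕜] E) (α : 𝕜) (u v : E) :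
    u - (v + α • (A u - A v)) = (1 - α • A) (u - v) := by
  simp only [sub_apply, one_apply_eq_self, smul_apply, map_sub, smul_sub]
  abel

theorem norm_sub_richardson_step_le (A : E →L[𝕜] E) (α : 𝕜) (u v : E) :
    ‖u - (v + α • (A u - A v))‖ ≤ ‖1 - α • A‖ * ‖u - v‖ := by
  rw [sub_richardson_step_eq]
  exact (1 - α • A).le_opNorm (u - v)

end Richardson

theorem norm_sub_apply_le_of_norm_sub_apply_le_mul {E : Type*} [SeminormedAddCommGroup E]
    {T : E → E} {ε : ℝ} (hT : ∀ w, ‖w - T w‖ ≤ ε * ‖w‖) (hε : 0 ≤ ε) (u w : E) :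
    ‖u - T w‖ ≤ (1 + ε) * ‖u - w‖ + ε * ‖u‖ := by
  have hw : ‖w‖ ≤ ‖u‖ + ‖u - w‖ := by
    simpa only [sub_sub_cancel] using norm_sub_le u (u - w)
  calc ‖u - T w‖ = ‖(u - w) + (w - T w)‖ := by rw [sub_add_sub_cancel]
    _ ≤ ‖u - w‖ + ε * ‖w‖ := (norm_add_le _ _).trans (by gcongr; exact hT w)
    _ ≤ ‖u - w‖ + ε * (‖u‖ + ‖u - w‖) := by gcongr
    _ = (1 + ε) * ‖u - w‖ + ε * ‖u‖ := by ring

section PerturbedGeometric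

variable {e : ℕ → ℝ} {q c : ℝ}

theorem le_pow_mul_add_of_le_mul_add (hq : 0 ≤ q) (hq1 : q < 1)
    (h : ∀ k, e (k + 1) ≤ q * e k + c) (k : ℕ) :
    e k ≤ q ^ k * (e 0 - c / (1 - q)) + c / (1 - q) := by
  have hfix : q * (c / (1 - q)) + c = c / (1 - q) := by
    field_simp [(sub_pos.2 hq1).ne']
    ring
  induction k with
  | zero => simp
  | succ k ih =>
    calc e (k + 1) ≤ q * e k + c := h k
      _ ≤ q * (q ^ k * (e 0 - c / (1 - q)) + c / (1 - q)) + c := by gcongr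
      _ = q ^ (k + 1) * (e 0 - c / (1 - q)) + (q * (c / (1 - q)) + c) := by ring
      _ = q ^ (k + 1) * (e 0 - c / (1 - q)) + c / (1 - q) := by rw [hfix]

theorem limsup_le_div_of_le_mul_add (hq : 0 ≤ q) (hq1 : q < 1) (he : ∀ k, 0 ≤ e k)
    (h : ∀ k, e (k + 1) ≤ q * e k + c) :
    limsup e atTop ≤ c / (1 - q) := by
  have hlim : Tendsto (fun k => q ^ k * (e 0 - c / (1 - q)) + c / (1 - q)) atTop
      (nhds (c / (1 - q))) := by
    simpa using ((tendsto_pow_atTop_nhds_zero_of_lt_one hq hq1).mul_const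
      (e 0 - c / (1 - q))).add_const (c / (1 - q))
  rw [← hlim.limsup_eq]
  exact limsup_le_limsup (.of_forall (le_pow_mul_add_of_le_mul_add hq hq1 h))
    (isCoboundedUnder_le_of_le atTop he) hlim.isBoundedUnder_le

end PerturbedGeometric

theorem stmt12_general
    {H : Type*} [NormedAddCommGroup H] [InnerProductSpace ℝ H]
    (A : H →L[ℝ] H) (b : H) (u : H) (hu : A u = b)
    (α : ℝ) (ρ : ℝ) (hρ : ‖(1 : H →L[ℝ] H) - α • A‖ ≤ ρ)
    (ε : ℝ) (hε0 : 0 ≤ ε) (hsmall : ρ + ε * (1 + ρ) < 1)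
    (T : H → H) (hT : ∀ w : H, ‖w - T w‖ ≤ ε * ‖w‖)
    (x : ℕ → H) (hx : ∀ k, x (k + 1) = T (x k + α • (b - A (x k)))) :
    Filter.limsup (fun k => ‖u - x k‖) atTop
      ≤ ε * (1 + ρ) * ‖u‖ / (1 - ρ - ε * (1 + ρ)) := by
  have hρ0 : 0 ≤ ρ := (norm_nonneg _).trans hρ
  have hq1 : (1 + ε) * ρ < 1 := by nlinarith
  have step : ∀ k, ‖u - x (k + 1)‖ ≤ (1 + ε) * ρ * ‖u - x k‖ + ε * ‖u‖ := by
    intro k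
    rw [hx k, ← hu]
    calc _ ≤ (1 + ε) * ‖u - (x k + α • (A u - A (x k)))‖ + ε * ‖u‖ :=
          norm_sub_apply_le_of_norm_sub_apply_le_mul hT hε0 _ _
      _ ≤ (1 + ε) * (ρ * ‖u - x k‖) + ε * ‖u‖ := by
          gcongr
          exact (norm_sub_richardson_step_le A α u (x k)).trans (by gcongr)
      _ = (1 + ε) * ρ * ‖u - x k‖ + ε * ‖u‖ := by ring
  refine (limsup_le_div_of_le_mul_add (by positivity) hq1 (fun k => norm_nonneg _) step).trans ?_
  apply div_le_div₀ (by positivity) 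
    (by nlinarith [mul_nonneg (mul_nonneg hε0 hρ0) (norm_nonneg u)]) (by linarith) (by nlinarith)

/-- Inexact (truncated) Richardson iteration: if `‖I − αA‖ ≤ ρ < 1` and the truncation
map satisfies `‖w − T_ε(w)‖ ≤ ε‖w‖`, then the iterates `x_{k+1} = T_ε(x_k + α(b − A x_k))`
satisfy `limsup ‖u − x_k‖ ≤ C(ε) = ε(1+ρ)‖u‖/(1 − ρ − ε(1+ρ))`. -/
theorem stmt12
    {H : Type*} [NormedAddCommGroup H] [InnerProductSpace ℝ H] [CompleteSpace H]
    (A : H →L[ℝ] H) (b : H) (u : H) (hu : A u = b)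
    (α : ℝ) (ρ : ℝ) (hρ : ‖(1 : H →L[ℝ] H) - α • A‖ ≤ ρ) (hρ1 : ρ < 1) (hρ0 : 0 ≤ ρ)
    (ε : ℝ) (hε0 : 0 ≤ ε) (hsmall : ρ + ε * (1 + ρ) < 1)
    (T : H → H) (hT : ∀ w : H, ‖w - T w‖ ≤ ε * ‖w‖)
    (x : ℕ → H) (hx : ∀ k, x (k + 1) = T (x k + α • (b - A (x k)))) :
    Filter.limsup (fun k => ‖u - x k‖) atTop
      ≤ ε * (1 + ρ) * ‖u‖ / (1 - ρ - ε * (1 + ρ)) :=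
  stmt12_general A b u hu α ρ hρ ε hε0 hsmall T hT x hx
end
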